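/- (Per-step contraction of AR-RHC under replay attacks, inequality (15)) Consider a closed-loop trajectory of the AR-RHC under a replay attack signal with at most S consecutive attacks, with horizon N ≥ S + 1, and assume every N′-QP encountered attains its infimum for N − S ≤ N′ ≤ N. Then for every k ≥ 0 (with s(−1) := 0), V_{N−s(k)}(x(k+1)) ≤ γ_{N,S}·V_{N−s(k−1)}(x(k)), where γ_{N,S} := (1 − λ_min(P)/φ_∞)·max{ 1 + α_{N−S−1}, (1 + α_{N−1})·∏_{ℓ=N−S}^{N−1}(1 + α_ℓ) }. -/

import Mathlib

open Matrix Finset Filter Topology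

/-- The smallest eigenvalue of a (symmetric) real matrix. -/
noncomputable def lamMin {n : ℕ} (R : Matrix (Fin n) (Fin n) ℝ) : ℝ :=
  if h : R.IsHermitian then ⨅ i, h.eigenvalues i else 0

/-- The largest eigenvalue of a (symmetric) real matrix. -/
noncomputable def lamMax {n : ℕ} (R : Matrix (Fin n) (Fin n) ℝ) : ℝ :=
  if h : R.IsHermitian then ⨆ i, h.eigenvalues i else 0

/-- The quadratic form `xᵀ R x`. -/
noncomputable def qf {p : ℕ} (R : Matrix (Fin p) (Fin p) ℝ) (x : Fin p → ℝ) : ℝ :=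
  x ⬝ᵥ R.mulVec x

/-- λ := 1 − λ_min(Q̄)/λ_max(P̄). -/
noncomputable def lamParam {n : ℕ} (Qb Pb : Matrix (Fin n) (Fin n) ℝ) : ℝ :=
  1 - lamMin Qb / lamMax Pb

/-- φ_N := (λ_max(P̄)·λ_max(P + KᵀQK)/λ_min(P̄))·(1 − λ^{N+1})/(1 − λ). -/
noncomputable def phi {n m : ℕ} (Qb Pb P : Matrix (Fin n) (Fin n) ℝ)
    (Q : Matrix (Fin m) (Fin m) ℝ) (K : Matrix (Fin m) (Fin n) ℝ) (N : ℕ) : ℝ :=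
  (lamMax Pb * lamMax (P + Kᵀ * Q * K) / lamMin Pb) *
    ((1 - lamParam Qb Pb ^ (N + 1)) / (1 - lamParam Qb Pb))

/-- φ_∞ := λ_max(P̄)·λ_max(P + KᵀQK)/(λ_min(P̄)·(1 − λ)). -/
noncomputable def phiInf {n m : ℕ} (Qb Pb P : Matrix (Fin n) (Fin n) ℝ)
    (Q : Matrix (Fin m) (Fin m) ℝ) (K : Matrix (Fin m) (Fin n) ℝ) : ℝ :=
  lamMax Pb * lamMax (P + Kᵀ * Q * K) / (lamMin Pb * (1 - lamParam Qb Pb))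

/-- ψ := λ_max(KᵀQK + ĀᵀPĀ)/λ_min(P). -/
noncomputable def psiC {n m : ℕ} (P Abar : Matrix (Fin n) (Fin n) ℝ)
    (Q : Matrix (Fin m) (Fin m) ℝ) (K : Matrix (Fin m) (Fin n) ℝ) : ℝ :=
  lamMax (Kᵀ * Q * K + Abarᵀ * P * Abar) / lamMin P

/-- χ := 1 − λ_min(P)/φ_∞. -/
noncomputable def chiC {n m : ℕ} (Qb Pb P : Matrix (Fin n) (Fin n) ℝ)
    (Q : Matrix (Fin m) (Fin m) ℝ) (K : Matrix (Fin m) (Fin n) ℝ) : ℝ :=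
  1 - lamMin P / phiInf Qb Pb P Q K

/-- α_N := (λ_max(KᵀQK + ĀᵀPĀ)/λ_min(P))·∏_{κ=0}^{N−1}(1 − λ_min(P)/φ_{κ+1}). -/
noncomputable def alphaC {n m : ℕ} (Qb Pb P Abar : Matrix (Fin n) (Fin n) ℝ)
    (Q : Matrix (Fin m) (Fin m) ℝ) (K : Matrix (Fin m) (Fin n) ℝ) (N : ℕ) : ℝ :=
  psiC P Abar Q K * ∏ κ ∈ Finset.range N, (1 - lamMin P / phi Qb Pb P Q K (κ + 1))

/-- γ_{N,S} := (1 − λ_min(P)/φ_∞)·max{1 + α_{N−S−1}, (1 + α_{N−1})·∏_{ℓ=N−S}^{N−1}(1 + α_ℓ)}. -/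
noncomputable def gammaNS {n m : ℕ} (Qb Pb P Abar : Matrix (Fin n) (Fin n) ℝ)
    (Q : Matrix (Fin m) (Fin m) ℝ) (K : Matrix (Fin m) (Fin n) ℝ) (N S : ℕ) : ℝ :=
  (1 - lamMin P / phiInf Qb Pb P Q K) *
    max (1 + alphaC Qb Pb P Abar Q K (N - S - 1))
      ((1 + alphaC Qb Pb P Abar Q K (N - 1)) *
        ∏ ℓ ∈ Finset.Ico (N - S) N, (1 + alphaC Qb Pb P Abar Q K ℓ))

/-- The trajectory of `x(τ+1) = A x(τ) + B u(τ)` from `x0` under the control sequence `u`. -/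
def traj {n m : ℕ} (A : Matrix (Fin n) (Fin n) ℝ) (B : Matrix (Fin n) (Fin m) ℝ)
    (x0 : Fin n → ℝ) (u : ℕ → Fin m → ℝ) : ℕ → Fin n → ℝ
  | 0 => x0
  | τ + 1 => A *ᵥ traj A B x0 u τ + B *ᵥ u τ

/-- Feasibility of a control sequence `u(0),…,u(N−1)` for the `N`-QP at `x`. -/
def Feasible {n m : ℕ} (A : Matrix (Fin n) (Fin n) ℝ) (B : Matrix (Fin n) (Fin m) ℝ)
    (X0 : Set (Fin n → ℝ)) (U : Set (Fin m → ℝ)) (N : ℕ) (x : Fin n → ℝ)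
    (u : ℕ → Fin m → ℝ) : Prop :=
  (∀ τ < N, u τ ∈ U) ∧ (∀ τ < N, traj A B x u (τ + 1) ∈ X0)

/-- The cost `Σ_{τ=0}^{N−1}(x(τ)ᵀPx(τ) + u(τ)ᵀQu(τ)) + x(N)ᵀPx(N)` of the `N`-QP. -/
noncomputable def cost {n m : ℕ} (A : Matrix (Fin n) (Fin n) ℝ) (B : Matrix (Fin n) (Fin m) ℝ)
    (P : Matrix (Fin n) (Fin n) ℝ) (Q : Matrix (Fin m) (Fin m) ℝ) (N : ℕ)
    (x : Fin n → ℝ) (u : ℕ → Fin m → ℝ) : ℝ :=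
  (∑ τ ∈ Finset.range N, (qf P (traj A B x u τ) + qf Q (u τ))) + qf P (traj A B x u N)

/-- `V_N(x)`: the optimal value of the `N`-QP at `x`. -/
noncomputable def Vopt {n m : ℕ} (A : Matrix (Fin n) (Fin n) ℝ) (B : Matrix (Fin n) (Fin m) ℝ)
    (P : Matrix (Fin n) (Fin n) ℝ) (Q : Matrix (Fin m) (Fin m) ℝ)
    (X0 : Set (Fin n → ℝ)) (U : Set (Fin m → ℝ)) (N : ℕ) (x : Fin n → ℝ) : ℝ :=
  sInf (cost A B P Q N x '' {u | Feasible A B X0 U N x u})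

/-! Let `j = s(k)`, so that `k - j` is the last instant at which a plan was received. By Bellman's
principle the unexecuted part of that plan is optimal for the `(N - j)`-QP at `x(k)`, and the plant
applies its first input. The feedback `u = K x` certifies `V_M(x) ≤ φ_M ‖x‖²`, so dropping the
first stage cost `xᵀPx ≥ λ_min(P) ‖x‖²` contracts the value by `1 - λ_min(P)/φ_{N-j} ≤ χ`.
Appending one feedback step to the shifted optimal plan restores the horizon at the price of a
factor `1 + α_{N-j-1}`, because along an optimal plan the terminal cost has been driven down by
the successive contractions. Under attack the horizon `N - j` at `x(k)` is compared with
`N - s(k-1) = N - j + 1` by monotonicity of `V`; after a fresh plan the horizons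
`N - s(k-1), …, N` are bridged by repeated horizon extensions, which produces the product of the
factors `1 + α_ℓ`. -/


section QuadraticForm

variable {n p : ℕ}

lemma lamMin_le_eigenvalues {R : Matrix (Fin n) (Fin n) ℝ} (h : R.IsHermitian) (i : Fin n) :
    lamMin R ≤ h.eigenvalues i := by
  rw [lamMin, dif_pos h]
  exact ciInf_le (Set.finite_range _).bddBelow i

lemma eigenvalues_le_lamMax {R : Matrix (Fin n) (Fin n) ℝ} (h : R.IsHermitian) (i : Fin n) :
    h.eigenvalues i ≤ lamMax R := by
  rw [lamMax, dif_pos h]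
  exact le_ciSup (Set.finite_range _).bddAbove i

lemma exists_eigenvalues_eq_lamMin [NeZero n] {R : Matrix (Fin n) (Fin n) ℝ}
    (h : R.IsHermitian) : ∃ i, lamMin R = h.eigenvalues i := by
  obtain ⟨i, hi⟩ := Finite.exists_min h.eigenvalues
  refine ⟨i, (lamMin_le_eigenvalues h i).antisymm ?_⟩
  rw [lamMin, dif_pos h]
  exact le_ciInf hi

lemma exists_eigenvalues_eq_lamMax [NeZero n] {R : Matrix (Fin n) (Fin n) ℝ}
    (h : R.IsHermitian) : ∃ i, lamMax R = h.eigenvalues i := by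
  obtain ⟨i, hi⟩ := Finite.exists_max h.eigenvalues
  refine ⟨i, le_antisymm ?_ (eigenvalues_le_lamMax h i)⟩
  rw [lamMax, dif_pos h]
  exact ciSup_le hi

lemma lamMin_pos [NeZero n] {R : Matrix (Fin n) (Fin n) ℝ} (h : R.PosDef) : 0 < lamMin R := by
  obtain ⟨i, hi⟩ := exists_eigenvalues_eq_lamMin h.1
  exact hi ▸ h.eigenvalues_pos i

lemma lamMax_nonneg [NeZero n] {R : Matrix (Fin n) (Fin n) ℝ} (h : R.PosSemidef) :
    0 ≤ lamMax R := by
  obtain ⟨i, hi⟩ := exists_eigenvalues_eq_lamMax h.1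
  exact hi ▸ h.eigenvalues_nonneg i

lemma lamMin_le_lamMax [NeZero n] {R : Matrix (Fin n) (Fin n) ℝ} (h : R.IsHermitian) :
    lamMin R ≤ lamMax R :=
  (lamMin_le_eigenvalues h 0).trans (eigenvalues_le_lamMax h 0)

lemma lamMax_pos [NeZero n] {R : Matrix (Fin n) (Fin n) ℝ} (h : R.PosDef) : 0 < lamMax R :=
  (lamMin_pos h).trans_le (lamMin_le_lamMax h.1)

lemma qf_eq_sum_eigenvalues {R : Matrix (Fin n) (Fin n) ℝ} (h : R.IsHermitian)
    (x : Fin n → ℝ) :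
    qf R x = ∑ i, h.eigenvalues i *
      ((star (h.eigenvectorUnitary : Matrix (Fin n) (Fin n) ℝ) *ᵥ x) i) ^ 2 := by
  have hV : x ᵥ* (h.eigenvectorUnitary : Matrix (Fin n) (Fin n) ℝ) =
      star (h.eigenvectorUnitary : Matrix (Fin n) (Fin n) ℝ) *ᵥ x := by
    rw [star_eq_conjTranspose, conjTranspose_eq_transpose_of_trivial, mulVec_transpose]
  rw [qf]
  conv_lhs => rw [h.spectral_theorem]
  rw [Unitary.conjStarAlgAut_apply, ← mulVec_mulVec, ← mulVec_mulVec, dotProduct_mulVec, hV,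
    dotProduct]
  exact Finset.sum_congr rfl fun i _ => by
    rw [mulVec_diagonal, Function.comp_apply, RCLike.ofReal_real_eq_id, id]; ring

lemma dotProduct_self_eq_sum_eigenvectorUnitary {R : Matrix (Fin n) (Fin n) ℝ}
    (h : R.IsHermitian) (x : Fin n → ℝ) :
    x ⬝ᵥ x = ∑ i, ((star (h.eigenvectorUnitary : Matrix (Fin n) (Fin n) ℝ) *ᵥ x) i) ^ 2 := by
  have hU := mem_unitaryGroup_iff.mp h.eigenvectorUnitary.2
  rw [star_eq_conjTranspose, conjTranspose_eq_transpose_of_trivial] at hU ⊢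
  simp only [sq, ← dotProduct.eq_1, dotProduct_mulVec, vecMul_mulVec, transpose_transpose, hU,
    vecMul_one]

lemma lamMin_mul_le_qf {R : Matrix (Fin n) (Fin n) ℝ} (h : R.IsHermitian) (x : Fin n → ℝ) :
    lamMin R * (x ⬝ᵥ x) ≤ qf R x := by
  rw [qf_eq_sum_eigenvalues h, dotProduct_self_eq_sum_eigenvectorUnitary h, Finset.mul_sum]
  gcongr with i
  exact lamMin_le_eigenvalues h i

lemma qf_le_lamMax_mul {R : Matrix (Fin n) (Fin n) ℝ} (h : R.IsHermitian) (x : Fin n → ℝ) :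
    qf R x ≤ lamMax R * (x ⬝ᵥ x) := by
  rw [qf_eq_sum_eigenvalues h, dotProduct_self_eq_sum_eigenvectorUnitary h, Finset.mul_sum]
  gcongr with i
  exact eigenvalues_le_lamMax h i

lemma lamMin_le_lamMax_of_qf_le [NeZero n] {R₁ R₂ : Matrix (Fin n) (Fin n) ℝ}
    (h₁ : R₁.IsHermitian) (h₂ : R₂.IsHermitian) (h : ∀ x, qf R₁ x ≤ qf R₂ x) :
    lamMin R₁ ≤ lamMax R₂ := by
  have he : Pi.single (0 : Fin n) (1 : ℝ) ⬝ᵥ Pi.single 0 1 = 1 := by simp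
  simpa [he] using
    (lamMin_mul_le_qf h₁ (Pi.single 0 1)).trans ((h _).trans (qf_le_lamMax_mul h₂ _))

lemma qf_nonneg {R : Matrix (Fin p) (Fin p) ℝ} (h : R.PosSemidef) (x : Fin p → ℝ) :
    0 ≤ qf R x := by
  simpa only [star_trivial, qf] using h.dotProduct_mulVec_nonneg x

lemma qf_add (R₁ R₂ : Matrix (Fin n) (Fin n) ℝ) (x : Fin n → ℝ) :
    qf (R₁ + R₂) x = qf R₁ x + qf R₂ x := by
  rw [qf, qf, qf, add_mulVec, dotProduct_add]

lemma qf_sub (R₁ R₂ : Matrix (Fin n) (Fin n) ℝ) (x : Fin n → ℝ) :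
    qf (R₁ - R₂) x = qf R₁ x - qf R₂ x := by
  rw [qf, qf, qf, sub_mulVec, dotProduct_sub]

lemma qf_transpose_mul_mul (R : Matrix (Fin p) (Fin p) ℝ) (M : Matrix (Fin p) (Fin n) ℝ)
    (x : Fin n → ℝ) : qf (Mᵀ * R * M) x = qf R (M *ᵥ x) := by
  rw [qf, qf, ← mulVec_mulVec, ← mulVec_mulVec, dotProduct_mulVec x, vecMul_transpose]

lemma Matrix.PosSemidef.transpose_mul_mul {R : Matrix (Fin p) (Fin p) ℝ} (h : R.PosSemidef)
    (M : Matrix (Fin p) (Fin n) ℝ) : (Mᵀ * R * M).PosSemidef := by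
  simpa using h.conjTranspose_mul_mul_same M

lemma qf_mulVec_of_lyapunov {Pb Qb Abar : Matrix (Fin n) (Fin n) ℝ}
    (hL : Abarᵀ * Pb * Abar - Pb = -Qb) (x : Fin n → ℝ) :
    qf Pb (Abar *ᵥ x) = qf Pb x - qf Qb x := by
  have hQb : Qb = Pb - Abarᵀ * Pb * Abar := by rw [← neg_neg Qb, ← hL]; abel
  rw [hQb, qf_sub, qf_transpose_mul_mul]
  ring

lemma qf_mulVec_le_of_lyapunov {Pb Qb Abar : Matrix (Fin n) (Fin n) ℝ} (hQb : Qb.PosSemidef)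
    (hL : Abarᵀ * Pb * Abar - Pb = -Qb) {c : ℝ} {x : Fin n → ℝ} (hx : qf Pb x ≤ c) :
    qf Pb (Abar *ᵥ x) ≤ c := by
  linarith [qf_mulVec_of_lyapunov hL x, qf_nonneg hQb x]

end QuadraticForm

section Constants

variable {n m : ℕ} [NeZero n] {Qb Pb P Abar : Matrix (Fin n) (Fin n) ℝ}
  {Q : Matrix (Fin m) (Fin m) ℝ} {K : Matrix (Fin m) (Fin n) ℝ}

lemma lamParam_nonneg (hQb : Qb.PosDef) (hPb : Pb.PosDef)
    (hL : Abarᵀ * Pb * Abar - Pb = -Qb) : 0 ≤ lamParam Qb Pb := by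
  have hle : lamMin Qb ≤ lamMax Pb := lamMin_le_lamMax_of_qf_le hQb.1 hPb.1 fun x => by
    linarith [qf_mulVec_of_lyapunov hL x, qf_nonneg hPb.posSemidef (Abar *ᵥ x)]
  rw [lamParam, sub_nonneg]
  exact div_le_one_of_le₀ hle (lamMax_pos hPb).le

lemma lamParam_lt_one (hQb : Qb.PosDef) (hPb : Pb.PosDef) : lamParam Qb Pb < 1 :=
  sub_lt_self _ (div_pos (lamMin_pos hQb) (lamMax_pos hPb))

lemma lamMin_le_lamMax_add (hP : P.PosDef) (hQ : Q.PosDef) :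
    lamMin P ≤ lamMax (P + Kᵀ * Q * K) := by
  have hQK := hQ.posSemidef.transpose_mul_mul K
  refine lamMin_le_lamMax_of_qf_le hP.1 (hP.1.add hQK.1) fun x => ?_
  rw [qf_add]
  linarith [qf_nonneg hQK x]

lemma psiC_nonneg (hP : P.PosDef) (hQ : Q.PosDef) : 0 ≤ psiC P Abar Q K :=
  div_nonneg (lamMax_nonneg ((hQ.posSemidef.transpose_mul_mul K).add
    (hP.posSemidef.transpose_mul_mul Abar))) (lamMin_pos hP).le

lemma qf_le_psiC_mul (hP : P.PosDef) (hQ : Q.PosDef) (x : Fin n → ℝ) :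
    qf (Kᵀ * Q * K + Abarᵀ * P * Abar) x ≤ psiC P Abar Q K * qf P x := by
  have hM := (hQ.posSemidef.transpose_mul_mul K).add (hP.posSemidef.transpose_mul_mul Abar)
  rw [psiC, div_mul_eq_mul_div, le_div_iff₀ (lamMin_pos hP)]
  nlinarith [mul_le_mul_of_nonneg_right (qf_le_lamMax_mul hM.1 x) (lamMin_pos hP).le,
    mul_le_mul_of_nonneg_left (lamMin_mul_le_qf hP.1 x) (lamMax_nonneg hM)]

end Constants

section Factors

variable {n m : ℕ} [NeZero n] {Qb Pb P Abar : Matrix (Fin n) (Fin n) ℝ}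
  {Q : Matrix (Fin m) (Fin m) ℝ} {K : Matrix (Fin m) (Fin n) ℝ}
  (hQb : Qb.PosDef) (hPb : Pb.PosDef) (hL : Abarᵀ * Pb * Abar - Pb = -Qb)
  (hP : P.PosDef) (hQ : Q.PosDef)
include hQb hPb hL hP hQ

lemma lamMin_le_phi (N : ℕ) : lamMin P ≤ phi Qb Pb P Q K N := by
  have hlam₀ := lamParam_nonneg hQb hPb hL
  have hlam₁ := lamParam_lt_one hQb hPb
  have hPb' : 1 ≤ lamMax Pb / lamMin Pb :=
    (one_le_div (lamMin_pos hPb)).2 (lamMin_le_lamMax hPb.1)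
  have hgeom : 1 ≤ (1 - lamParam Qb Pb ^ (N + 1)) / (1 - lamParam Qb Pb) := by
    rw [one_le_div (by linarith)]
    have := pow_le_of_le_one hlam₀ hlam₁.le (Nat.add_one_ne_zero N)
    linarith
  calc lamMin P ≤ 1 * lamMax (P + Kᵀ * Q * K) * 1 := by simpa using lamMin_le_lamMax_add hP hQ
    _ ≤ lamMax Pb / lamMin Pb * lamMax (P + Kᵀ * Q * K) *
          ((1 - lamParam Qb Pb ^ (N + 1)) / (1 - lamParam Qb Pb)) := by
        have := (lamMin_pos hP).trans_le (lamMin_le_lamMax_add (K := K) hP hQ)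
        gcongr
    _ = phi Qb Pb P Q K N := by rw [phi]; ring

lemma phi_pos (N : ℕ) : 0 < phi Qb Pb P Q K N :=
  (lamMin_pos hP).trans_le (lamMin_le_phi hQb hPb hL hP hQ N)

lemma phi_le_phiInf (N : ℕ) : phi Qb Pb P Q K N ≤ phiInf Qb Pb P Q K := by
  have hlam₀ := lamParam_nonneg hQb hPb hL
  have hlam₁ := lamParam_lt_one hQb hPb
  have hC : 0 ≤ lamMax Pb * lamMax (P + Kᵀ * Q * K) / lamMin Pb :=
    div_nonneg (mul_nonneg (lamMax_pos hPb).le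
      ((lamMin_pos hP).le.trans (lamMin_le_lamMax_add hP hQ))) (lamMin_pos hPb).le
  calc phi Qb Pb P Q K N
      = lamMax Pb * lamMax (P + Kᵀ * Q * K) / lamMin Pb * (1 - lamParam Qb Pb ^ (N + 1)) /
          (1 - lamParam Qb Pb) := by rw [phi, mul_div_assoc']
    _ ≤ lamMax Pb * lamMax (P + Kᵀ * Q * K) / lamMin Pb * 1 / (1 - lamParam Qb Pb) := by
        have := pow_nonneg hlam₀ (N + 1)
        gcongr
        · linarith
    _ = phiInf Qb Pb P Q K := by rw [phiInf, mul_one, div_div]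

lemma one_sub_div_phi_nonneg (N : ℕ) : 0 ≤ 1 - lamMin P / phi Qb Pb P Q K N :=
  sub_nonneg.2 (div_le_one_of_le₀ (lamMin_le_phi hQb hPb hL hP hQ N)
    (phi_pos hQb hPb hL hP hQ N).le)

lemma one_sub_div_phi_le_chiC (N : ℕ) : 1 - lamMin P / phi Qb Pb P Q K N ≤ chiC Qb Pb P Q K := by
  have := phi_pos (K := K) hQb hPb hL hP hQ N
  have := lamMin_pos hP
  rw [chiC]
  gcongr
  exact phi_le_phiInf hQb hPb hL hP hQ N

lemma chiC_nonneg : 0 ≤ chiC Qb Pb P Q K :=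
  (one_sub_div_phi_nonneg hQb hPb hL hP hQ 0).trans (one_sub_div_phi_le_chiC hQb hPb hL hP hQ 0)

lemma alphaC_nonneg (N : ℕ) : 0 ≤ alphaC Qb Pb P Abar Q K N :=
  mul_nonneg (psiC_nonneg hP hQ) (prod_nonneg fun _ _ => one_sub_div_phi_nonneg hQb hPb hL hP hQ _)

lemma alphaC_antitone : Antitone (alphaC Qb Pb P Abar Q K) := by
  intro N₁ N₂ h
  have hfac := one_sub_div_phi_nonneg (K := K) hQb hPb hL hP hQ
  have hfac₁ : ∀ κ, 1 - lamMin P / phi Qb Pb P Q K κ ≤ 1 := fun κ =>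
    sub_le_self _ (div_nonneg (lamMin_pos hP).le (phi_pos hQb hPb hL hP hQ κ).le)
  refine mul_le_mul_of_nonneg_left ?_ (psiC_nonneg hP hQ)
  rw [← prod_range_mul_prod_Ico _ h]
  exact mul_le_of_le_one_right (prod_nonneg fun _ _ => hfac _)
    (prod_le_one (fun _ _ => hfac _) fun _ _ => hfac₁ _)

lemma one_add_alphaC_mul_chiC_nonneg (ℓ : ℕ) :
    0 ≤ (1 + alphaC Qb Pb P Abar Q K ℓ) * chiC Qb Pb P Q K :=
  mul_nonneg (add_nonneg zero_le_one (alphaC_nonneg hQb hPb hL hP hQ ℓ))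
    (chiC_nonneg hQb hPb hL hP hQ)

lemma one_add_alphaC_mul_chiC_le_gammaNS {N S ℓ : ℕ} (hℓ : N - S - 1 ≤ ℓ) :
    (1 + alphaC Qb Pb P Abar Q K ℓ) * chiC Qb Pb P Q K ≤ gammaNS Qb Pb P Abar Q K N S := by
  rw [gammaNS, ← chiC, mul_comm]
  gcongr
  · exact chiC_nonneg hQb hPb hL hP hQ
  · exact le_max_of_le_left (by gcongr; exact alphaC_antitone hQb hPb hL hP hQ hℓ)

lemma one_add_alphaC_mul_chiC_mul_prod_le_gammaNS {N S i : ℕ} (hi : i ≤ S) :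
    (1 + alphaC Qb Pb P Abar Q K (N - 1)) * chiC Qb Pb P Q K *
        ∏ ℓ ∈ Ico (N - i) N, (1 + alphaC Qb Pb P Abar Q K ℓ) ≤
      gammaNS Qb Pb P Abar Q K N S := by
  have hα : ∀ ℓ, 1 ≤ 1 + alphaC Qb Pb P Abar Q K ℓ := fun ℓ =>
    le_add_of_nonneg_right (alphaC_nonneg hQb hPb hL hP hQ ℓ)
  have hprod : ∏ ℓ ∈ Ico (N - i) N, (1 + alphaC Qb Pb P Abar Q K ℓ) ≤
      ∏ ℓ ∈ Ico (N - S) N, (1 + alphaC Qb Pb P Abar Q K ℓ) := by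
    rw [← prod_Ico_consecutive _ (Nat.sub_le_sub_left hi N) (Nat.sub_le N i)]
    exact le_mul_of_one_le_left (prod_nonneg fun _ _ => zero_le_one.trans (hα _))
      (one_le_prod fun _ _ => hα _)
  rw [gammaNS, ← chiC, mul_comm _ (chiC _ _ _ _ _), mul_assoc]
  gcongr
  · exact chiC_nonneg hQb hPb hL hP hQ
  · exact le_max_of_le_right (by gcongr; exact zero_le_one.trans (hα _))

end Factors

def IsOptimal {n m : ℕ} (A : Matrix (Fin n) (Fin n) ℝ) (B : Matrix (Fin n) (Fin m) ℝ)
    (P : Matrix (Fin n) (Fin n) ℝ) (Q : Matrix (Fin m) (Fin m) ℝ)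
    (X0 : Set (Fin n → ℝ)) (U : Set (Fin m → ℝ)) (N : ℕ) (x : Fin n → ℝ)
    (u : ℕ → Fin m → ℝ) : Prop :=
  Feasible A B X0 U N x u ∧ cost A B P Q N x u = Vopt A B P Q X0 U N x

section OpenLoop

variable {n m : ℕ} {A : Matrix (Fin n) (Fin n) ℝ} {B : Matrix (Fin n) (Fin m) ℝ}
  {P : Matrix (Fin n) (Fin n) ℝ} {Q : Matrix (Fin m) (Fin m) ℝ}
  {X0 : Set (Fin n → ℝ)} {U : Set (Fin m → ℝ)}

lemma traj_congr {x : Fin n → ℝ} {u v : ℕ → Fin m → ℝ} :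
    ∀ {τ : ℕ}, (∀ σ < τ, u σ = v σ) → traj A B x u τ = traj A B x v τ
  | 0, _ => rfl
  | τ + 1, h => by
    rw [traj, traj, traj_congr fun σ hσ => h σ (hσ.trans τ.lt_succ_self), h τ τ.lt_succ_self]

lemma traj_shift (x : Fin n → ℝ) (u : ℕ → Fin m → ℝ) (r : ℕ) :
    ∀ τ, traj A B (traj A B x u r) (fun σ => u (r + σ)) τ = traj A B x u (r + τ)
  | 0 => rfl
  | τ + 1 => by rw [traj, traj_shift x u r τ]; rfl

lemma cost_succ (N : ℕ) (x : Fin n → ℝ) (u : ℕ → Fin m → ℝ) :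
    cost A B P Q (N + 1) x u =
      qf P x + qf Q (u 0) + cost A B P Q N (traj A B x u 1) (fun σ => u (1 + σ)) := by
  simp only [cost, sum_range_succ', traj_shift]
  simp only [add_comm _ 1]
  rw [traj.eq_1]
  ring

lemma Feasible.tail {N : ℕ} {x : Fin n → ℝ} {u : ℕ → Fin m → ℝ}
    (h : Feasible A B X0 U (N + 1) x u) :
    Feasible A B X0 U N (traj A B x u 1) (fun σ => u (1 + σ)) := by
  refine ⟨fun τ hτ => h.1 (1 + τ) (by omega), fun τ hτ => ?_⟩
  rw [traj_shift]
  exact h.2 (1 + τ) (by omega)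

lemma cost_nonneg (hP : P.PosSemidef) (hQ : Q.PosSemidef) (N : ℕ) (x : Fin n → ℝ)
    (u : ℕ → Fin m → ℝ) : 0 ≤ cost A B P Q N x u :=
  add_nonneg (sum_nonneg fun _ _ => add_nonneg (qf_nonneg hP _) (qf_nonneg hQ _))
    (qf_nonneg hP _)

lemma Vopt_le_cost (hP : P.PosSemidef) (hQ : Q.PosSemidef) {N : ℕ} {x : Fin n → ℝ}
    {u : ℕ → Fin m → ℝ} (h : Feasible A B X0 U N x u) :
    Vopt A B P Q X0 U N x ≤ cost A B P Q N x u :=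
  csInf_le ⟨0, by rintro _ ⟨w, -, rfl⟩; exact cost_nonneg hP hQ N x w⟩ ⟨u, h, rfl⟩

lemma Vopt_nonneg (hP : P.PosSemidef) (hQ : Q.PosSemidef) {N : ℕ} {x : Fin n → ℝ}
    (h : ∃ u, Feasible A B X0 U N x u) : 0 ≤ Vopt A B P Q X0 U N x := by
  obtain ⟨u, hu⟩ := h
  exact le_csInf ⟨_, u, hu, rfl⟩ (by rintro _ ⟨w, -, rfl⟩; exact cost_nonneg hP hQ N x w)

lemma Vopt_le_Vopt_succ (hP : P.PosSemidef) (hQ : Q.PosSemidef) {N : ℕ} {x : Fin n → ℝ}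
    (h : ∃ u, Feasible A B X0 U (N + 1) x u) :
    Vopt A B P Q X0 U N x ≤ Vopt A B P Q X0 U (N + 1) x := by
  obtain ⟨u, hu⟩ := h
  refine le_csInf ⟨_, u, hu, rfl⟩ ?_
  rintro _ ⟨w, hw, rfl⟩
  refine (Vopt_le_cost hP hQ
    ⟨fun τ hτ => hw.1 τ (by omega), fun τ hτ => hw.2 τ (by omega)⟩).trans ?_
  rw [cost, cost, sum_range_succ]
  linarith [qf_nonneg hP (traj A B x w (N + 1)), qf_nonneg hQ (w N)]

lemma IsOptimal.tail (hP : P.PosSemidef) (hQ : Q.PosSemidef) {N : ℕ} {x : Fin n → ℝ}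
    {u : ℕ → Fin m → ℝ} (h : IsOptimal A B P Q X0 U (N + 1) x u) :
    IsOptimal A B P Q X0 U N (traj A B x u 1) (fun σ => u (1 + σ)) := by
  refine ⟨h.1.tail, le_antisymm ?_ (Vopt_le_cost hP hQ h.1.tail)⟩
  refine le_csInf ⟨_, _, h.1.tail, rfl⟩ ?_
  rintro _ ⟨w, hw, rfl⟩
  -- prepend `u 0` to a competitor `w` for the tail problem
  let v : ℕ → Fin m → ℝ := fun
    | 0 => u 0
    | σ + 1 => w σ
  have hv : (fun σ => v (1 + σ)) = w := funext fun σ => by rw [add_comm]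
  have hvx : traj A B x v 1 = traj A B x u 1 := rfl
  have hvfeas : Feasible A B X0 U (N + 1) x v := by
    refine ⟨fun τ hτ => ?_, fun τ hτ => ?_⟩
    · cases τ with
      | zero => exact h.1.1 0 (by omega)
      | succ τ => exact hw.1 τ (by omega)
    · rw [add_comm, ← traj_shift, hvx, hv]
      cases τ with
      | zero => exact h.1.2 0 (by omega)
      | succ τ => exact hw.2 τ (by omega)
  have := Vopt_le_cost hP hQ hvfeas
  rw [← h.2, cost_succ, cost_succ, hvx, hv] at this
  linarith

lemma IsOptimal.shift (hP : P.PosSemidef) (hQ : Q.PosSemidef) {N : ℕ} {x : Fin n → ℝ}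
    {u : ℕ → Fin m → ℝ} (r : ℕ) (h : IsOptimal A B P Q X0 U (N + r) x u) :
    IsOptimal A B P Q X0 U N (traj A B x u r) (fun σ => u (r + σ)) := by
  induction r generalizing N with
  | zero => simpa only [zero_add, add_zero, traj.eq_1] using h
  | succ r ih =>
    have := (ih (N := N + 1) (by rwa [add_right_comm])).tail hP hQ
    simpa only [traj_shift, ← add_assoc] using this

end OpenLoop

def feedbackInput {n m : ℕ} (A : Matrix (Fin n) (Fin n) ℝ) (B : Matrix (Fin n) (Fin m) ℝ)
    (K : Matrix (Fin m) (Fin n) ℝ) (x : Fin n → ℝ) : ℕ → Fin m → ℝ :=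
  fun τ => K *ᵥ ((A + B * K) ^ τ *ᵥ x)

section Feedback

variable {n m : ℕ} {A : Matrix (Fin n) (Fin n) ℝ} {B : Matrix (Fin n) (Fin m) ℝ}
  {K : Matrix (Fin m) (Fin n) ℝ} {Qb Pb P : Matrix (Fin n) (Fin n) ℝ}
  {Q : Matrix (Fin m) (Fin m) ℝ} {X0 : Set (Fin n → ℝ)} {U : Set (Fin m → ℝ)}

lemma traj_feedbackInput (x : Fin n → ℝ) :
    ∀ τ, traj A B x (feedbackInput A B K x) τ = (A + B * K) ^ τ *ᵥ x
  | 0 => by rw [traj, pow_zero, one_mulVec]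
  | τ + 1 => by
    rw [traj, traj_feedbackInput x τ, feedbackInput, pow_succ', ← mulVec_mulVec, add_mulVec,
      ← mulVec_mulVec]

lemma feasible_feedbackInput (hinv : ∀ y ∈ X0, (A + B * K) *ᵥ y ∈ X0)
    (hKU : ∀ y ∈ X0, K *ᵥ y ∈ U) {x : Fin n → ℝ} (hx : x ∈ X0) (N : ℕ) :
    Feasible A B X0 U N x (feedbackInput A B K x) := by
  have hmem : ∀ τ, (A + B * K) ^ τ *ᵥ x ∈ X0 := fun τ => by
    induction τ with
    | zero => rwa [pow_zero, one_mulVec]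
    | succ τ ih => rw [pow_succ', ← mulVec_mulVec]; exact hinv _ ih
  exact ⟨fun τ _ => hKU _ (hmem τ), fun τ _ => traj_feedbackInput x (τ + 1) ▸ hmem (τ + 1)⟩

-- Extend `u` by one feedback step `u(N) = K x(N)`.
lemma exists_feasible_succ_cost_eq (hinv : ∀ y ∈ X0, (A + B * K) *ᵥ y ∈ X0)
    (hKU : ∀ y ∈ X0, K *ᵥ y ∈ U) {N : ℕ} {x : Fin n → ℝ} {u : ℕ → Fin m → ℝ} (hx : x ∈ X0)
    (hu : Feasible A B X0 U N x u) :
    ∃ v, Feasible A B X0 U (N + 1) x v ∧ cost A B P Q (N + 1) x v =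
      cost A B P Q N x u + qf (Kᵀ * Q * K + (A + B * K)ᵀ * P * (A + B * K)) (traj A B x u N) := by
  set z := traj A B x u N
  have hz : z ∈ X0 := by
    cases N with
    | zero => exact hx
    | succ N => exact hu.2 N N.lt_succ_self
  let v : ℕ → Fin m → ℝ := fun τ => if τ < N then u τ else K *ᵥ z
  have hvlt : ∀ τ < N, v τ = u τ := fun τ h => if_pos h
  have hvN : v N = K *ᵥ z := if_neg N.lt_irrefl
  have hvu : ∀ τ ≤ N, traj A B x v τ = traj A B x u τ := fun τ hτ =>
    traj_congr fun σ hσ => hvlt σ (hσ.trans_le hτ)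
  have htrajN : traj A B x v (N + 1) = (A + B * K) *ᵥ z := by
    rw [traj, hvu N le_rfl, hvN, add_mulVec, mulVec_mulVec]
  refine ⟨v, ⟨fun τ hτ => ?_, fun τ hτ => ?_⟩, ?_⟩
  · rcases (Nat.lt_succ_iff.1 hτ).lt_or_eq with h | rfl
    · exact hvlt τ h ▸ hu.1 τ h
    · exact hvN ▸ hKU z hz
  · rcases (Nat.lt_succ_iff.1 hτ).lt_or_eq with h | rfl
    · exact hvu (τ + 1) h ▸ hu.2 τ h
    · exact htrajN ▸ hinv z hz
  · have hstage : ∀ τ ∈ range N, qf P (traj A B x v τ) + qf Q (v τ) =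
        qf P (traj A B x u τ) + qf Q (u τ) := fun τ hτ => by
      rw [hvu τ (mem_range.1 hτ).le, hvlt τ (mem_range.1 hτ)]
    rw [cost, cost, sum_range_succ, sum_congr rfl hstage, htrajN, hvu N le_rfl, hvN, qf_add,
      qf_transpose_mul_mul, qf_transpose_mul_mul]
    ring

lemma qf_pow_mulVec_le [NeZero n] {Abar : Matrix (Fin n) (Fin n) ℝ} (hQb : Qb.PosDef)
    (hPb : Pb.PosDef) (hL : Abarᵀ * Pb * Abar - Pb = -Qb) (x : Fin n → ℝ) (τ : ℕ) :
    qf Pb (Abar ^ τ *ᵥ x) ≤ lamParam Qb Pb ^ τ * qf Pb x := by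
  induction τ with
  | zero => rw [pow_zero, pow_zero, one_mulVec, one_mul]
  | succ τ ih =>
    set y := Abar ^ τ *ᵥ x
    have hdecay : qf Pb (Abar *ᵥ y) ≤ lamParam Qb Pb * qf Pb y := by
      have hQy : lamMin Qb / lamMax Pb * qf Pb y ≤ qf Qb y := by
        rw [div_mul_eq_mul_div, div_le_iff₀ (lamMax_pos hPb)]
        nlinarith [lamMin_mul_le_qf hQb.1 y, qf_le_lamMax_mul hPb.1 y, lamMin_pos hQb,
          lamMax_pos hPb]
      rw [qf_mulVec_of_lyapunov hL, lamParam]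
      linarith
    rw [pow_succ', ← mulVec_mulVec, pow_succ', mul_assoc]
    exact hdecay.trans (mul_le_mul_of_nonneg_left ih (lamParam_nonneg hQb hPb hL))

lemma cost_feedbackInput_le [NeZero n] (hQb : Qb.PosDef) (hPb : Pb.PosDef)
    (hL : (A + B * K)ᵀ * Pb * (A + B * K) - Pb = -Qb) (hP : P.PosSemidef)
    (hQ : Q.PosSemidef) (x : Fin n → ℝ) (N : ℕ) :
    cost A B P Q N x (feedbackInput A B K x) ≤ phi Qb Pb P Q K N * (x ⬝ᵥ x) := by
  set R := P + Kᵀ * Q * K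
  set lam := lamParam Qb Pb
  have hR : R.PosSemidef := hP.add (hQ.transpose_mul_mul K)
  have hlam₀ : 0 ≤ lam := lamParam_nonneg hQb hPb hL
  have hlam₁ : lam < 1 := lamParam_lt_one hQb hPb
  have hstage : ∀ τ, qf R ((A + B * K) ^ τ *ᵥ x) ≤
      lamMax Pb * lamMax R / lamMin Pb * lam ^ τ * (x ⬝ᵥ x) := fun τ => by
    set z := (A + B * K) ^ τ *ᵥ x
    have hz : lamMin Pb * (z ⬝ᵥ z) ≤ lam ^ τ * (lamMax Pb * (x ⬝ᵥ x)) :=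
      (lamMin_mul_le_qf hPb.1 z).trans ((qf_pow_mulVec_le hQb hPb hL x τ).trans
        (by gcongr; exact qf_le_lamMax_mul hPb.1 x))
    have hR' := qf_le_lamMax_mul hR.1 z
    rw [div_mul_eq_mul_div, div_mul_eq_mul_div, le_div_iff₀ (lamMin_pos hPb)]
    nlinarith [mul_le_mul_of_nonneg_left hz (lamMax_nonneg hR),
      mul_le_mul_of_nonneg_right hR' (lamMin_pos hPb).le]
  have hstageCost : ∀ z, qf P z + qf Q (K *ᵥ z) = qf R z := fun z => by
    rw [qf_add, qf_transpose_mul_mul]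
  have hterminal : qf P ((A + B * K) ^ N *ᵥ x) ≤ qf R ((A + B * K) ^ N *ᵥ x) := by
    rw [qf_add]
    linarith [qf_nonneg (hQ.transpose_mul_mul K) ((A + B * K) ^ N *ᵥ x)]
  calc cost A B P Q N x (feedbackInput A B K x)
      ≤ ∑ τ ∈ range (N + 1), lamMax Pb * lamMax R / lamMin Pb * lam ^ τ * (x ⬝ᵥ x) := by
        rw [cost, sum_range_succ, traj_feedbackInput]
        gcongr with τ
        · rw [traj_feedbackInput, feedbackInput, hstageCost]
          exact hstage τ
        · exact hterminal.trans (hstage N)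
    _ = phi Qb Pb P Q K N * (x ⬝ᵥ x) := by
        have hgeom : (lam ^ (N + 1) - 1) / (lam - 1) = (1 - lam ^ (N + 1)) / (1 - lam) := by
          rw [← neg_sub 1 lam, ← neg_sub 1 (lam ^ (N + 1)), neg_div_neg_eq]
        rw [← sum_mul, ← mul_sum, geom_sum_eq hlam₁.ne, hgeom, phi]

lemma Vopt_le_phi_mul [NeZero n] (hQb : Qb.PosDef) (hPb : Pb.PosDef)
    (hL : (A + B * K)ᵀ * Pb * (A + B * K) - Pb = -Qb) (hP : P.PosSemidef)
    (hQ : Q.PosSemidef) (hinv : ∀ y ∈ X0, (A + B * K) *ᵥ y ∈ X0)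
    (hKU : ∀ y ∈ X0, K *ᵥ y ∈ U) {x : Fin n → ℝ} (hx : x ∈ X0) (N : ℕ) :
    Vopt A B P Q X0 U N x ≤ phi Qb Pb P Q K N * (x ⬝ᵥ x) :=
  (Vopt_le_cost hP hQ (feasible_feedbackInput hinv hKU hx N)).trans
    (cost_feedbackInput_le hQb hPb hL hP hQ x N)

lemma Vopt_at_zero (hP : P.PosSemidef) (hQ : Q.PosSemidef)
    (hinv : ∀ y ∈ X0, (A + B * K) *ᵥ y ∈ X0) (hKU : ∀ y ∈ X0, K *ᵥ y ∈ U)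
    (h0 : (0 : Fin n → ℝ) ∈ X0) (N : ℕ) : Vopt A B P Q X0 U N 0 = 0 := by
  have hfeas := feasible_feedbackInput hinv hKU h0 N
  refine le_antisymm ?_ (Vopt_nonneg hP hQ ⟨_, hfeas⟩)
  refine (Vopt_le_cost hP hQ hfeas).trans_eq ?_
  simp [cost, traj_feedbackInput, feedbackInput, qf]

end Feedback

section Contraction

variable {n m : ℕ} [NeZero n] {A : Matrix (Fin n) (Fin n) ℝ} {B : Matrix (Fin n) (Fin m) ℝ}
  {K : Matrix (Fin m) (Fin n) ℝ} {Qb Pb P : Matrix (Fin n) (Fin n) ℝ}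
  {Q : Matrix (Fin m) (Fin m) ℝ} {X0 : Set (Fin n → ℝ)} {U : Set (Fin m → ℝ)}
  (hQb : Qb.PosDef) (hPb : Pb.PosDef) (hL : (A + B * K)ᵀ * Pb * (A + B * K) - Pb = -Qb)
  (hP : P.PosDef) (hQ : Q.PosDef) (hinv : ∀ y ∈ X0, (A + B * K) *ᵥ y ∈ X0)
  (hKU : ∀ y ∈ X0, K *ᵥ y ∈ U)
include hQb hPb hL hP hQ hinv hKU

-- Drop the first stage cost `xᵀPx ≥ λ_min(P)‖x‖² ≥ (λ_min(P)/φ_{N+1}) V_{N+1}(x)`.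
lemma Vopt_traj_one_le {N : ℕ} {x : Fin n → ℝ} {u : ℕ → Fin m → ℝ} (hx : x ∈ X0)
    (hu : IsOptimal A B P Q X0 U (N + 1) x u) :
    Vopt A B P Q X0 U N (traj A B x u 1) ≤
      (1 - lamMin P / phi Qb Pb P Q K (N + 1)) * Vopt A B P Q X0 U (N + 1) x := by
  have hphi := phi_pos (K := K) hQb hPb hL hP hQ (N + 1)
  have hfirst : lamMin P / phi Qb Pb P Q K (N + 1) * Vopt A B P Q X0 U (N + 1) x ≤ qf P x := by
    rw [div_mul_eq_mul_div, div_le_iff₀ hphi]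
    nlinarith [Vopt_le_phi_mul hQb hPb hL hP.posSemidef hQ.posSemidef hinv hKU hx (N + 1),
      lamMin_mul_le_qf hP.1 x, lamMin_pos hP]
  have hcost := cost_succ (A := A) (B := B) (P := P) (Q := Q) N x u
  rw [hu.2, (hu.tail hP.posSemidef hQ.posSemidef).2] at hcost
  nlinarith [qf_nonneg hQ.posSemidef (u 0)]

lemma qf_traj_le_prod_mul_Vopt {N : ℕ} {x : Fin n → ℝ} {u : ℕ → Fin m → ℝ} (hx : x ∈ X0)
    (hu : IsOptimal A B P Q X0 U N x u) :
    qf P (traj A B x u N) ≤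
      (∏ κ ∈ range N, (1 - lamMin P / phi Qb Pb P Q K (κ + 1))) * Vopt A B P Q X0 U N x := by
  induction N generalizing x u with
  | zero =>
    rw [prod_range_zero, one_mul, ← hu.2]
    simp [cost, traj]
  | succ N ih =>
    have htail := ih (hu.1.2 0 N.succ_pos) (hu.tail hP.posSemidef hQ.posSemidef)
    rw [traj_shift, add_comm] at htail
    refine htail.trans ?_
    rw [prod_range_succ, mul_assoc]
    exact mul_le_mul_of_nonneg_left (Vopt_traj_one_le hQb hPb hL hP hQ hinv hKU hx hu)
      (prod_nonneg fun _ _ => one_sub_div_phi_nonneg hQb hPb hL hP hQ _)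

lemma Vopt_succ_le {N : ℕ} {x : Fin n → ℝ} {u : ℕ → Fin m → ℝ} (hx : x ∈ X0)
    (hu : IsOptimal A B P Q X0 U N x u) :
    Vopt A B P Q X0 U (N + 1) x ≤
      (1 + alphaC Qb Pb P (A + B * K) Q K N) * Vopt A B P Q X0 U N x := by
  obtain ⟨v, hvfeas, hvcost⟩ := exists_feasible_succ_cost_eq hinv hKU hx hu.1 (P := P) (Q := Q)
  calc Vopt A B P Q X0 U (N + 1) x ≤ cost A B P Q (N + 1) x v :=
        Vopt_le_cost hP.posSemidef hQ.posSemidef hvfeas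
    _ ≤ Vopt A B P Q X0 U N x + psiC P (A + B * K) Q K *
          ((∏ κ ∈ range N, (1 - lamMin P / phi Qb Pb P Q K (κ + 1))) *
            Vopt A B P Q X0 U N x) := by
        rw [hvcost, hu.2]
        exact add_le_add le_rfl ((qf_le_psiC_mul hP hQ _).trans (mul_le_mul_of_nonneg_left
          (qf_traj_le_prod_mul_Vopt hQb hPb hL hP hQ hinv hKU hx hu) (psiC_nonneg hP hQ)))
    _ = (1 + alphaC Qb Pb P (A + B * K) Q K N) * Vopt A B P Q X0 U N x := by
        rw [alphaC]
        ring

lemma Vopt_le_prod_mul_Vopt {a b : ℕ} {x : Fin n → ℝ} (hx : x ∈ X0) (hab : a ≤ b)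
    (hopt : ∀ N, a ≤ N → N < b → ∃ u, IsOptimal A B P Q X0 U N x u) :
    Vopt A B P Q X0 U b x ≤
      (∏ ℓ ∈ Ico a b, (1 + alphaC Qb Pb P (A + B * K) Q K ℓ)) * Vopt A B P Q X0 U a x := by
  induction b, hab using Nat.le_induction with
  | base => rw [Ico_self, prod_empty, one_mul]
  | succ b hab ih =>
    obtain ⟨u, hu⟩ := hopt b hab b.lt_succ_self
    have hα := alphaC_nonneg (Abar := A + B * K) (K := K) hQb hPb hL hP hQ b
    rw [prod_Ico_succ_top hab, mul_comm _ (1 + _), mul_assoc]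
    exact (Vopt_succ_le hQb hPb hL hP hQ hinv hKU hx hu).trans
      (mul_le_mul_of_nonneg_left (ih fun N h₁ h₂ => hopt N h₁ (h₂.trans b.lt_succ_self))
        (by linarith))

lemma Vopt_traj_one_le_chiC_mul {N : ℕ} {x : Fin n → ℝ} {u : ℕ → Fin m → ℝ} (hx : x ∈ X0)
    (hu : IsOptimal A B P Q X0 U (N + 1) x u) :
    Vopt A B P Q X0 U (N + 1) (traj A B x u 1) ≤
      (1 + alphaC Qb Pb P (A + B * K) Q K N) * chiC Qb Pb P Q K *
        Vopt A B P Q X0 U (N + 1) x := by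
  have hα := alphaC_nonneg (Abar := A + B * K) (K := K) hQb hPb hL hP hQ N
  have hV := Vopt_nonneg (N := N + 1) hP.posSemidef hQ.posSemidef
    ⟨_, feasible_feedbackInput hinv hKU hx _⟩
  rw [mul_assoc]
  refine (Vopt_succ_le hQb hPb hL hP hQ hinv hKU (hu.1.2 0 N.succ_pos)
    (hu.tail hP.posSemidef hQ.posSemidef)).trans (mul_le_mul_of_nonneg_left ?_ (by linarith))
  exact (Vopt_traj_one_le hQb hPb hL hP hQ hinv hKU hx hu).trans
    (mul_le_mul_of_nonneg_right (one_sub_div_phi_le_chiC hQb hPb hL hP hQ _) hV)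

lemma Vopt_traj_one_le_gammaNS_mul_Vopt_sub {S N i : ℕ} (hi : i ≤ S) (hN : 0 < N)
    {x : Fin n → ℝ} {u : ℕ → Fin m → ℝ} (hx : x ∈ X0) (hu : IsOptimal A B P Q X0 U N x u)
    (hattain : ∀ N', N - i ≤ N' → N' < N → ∃ w, IsOptimal A B P Q X0 U N' x w) :
    Vopt A B P Q X0 U N (traj A B x u 1) ≤
      gammaNS Qb Pb P (A + B * K) Q K N S * Vopt A B P Q X0 U (N - i) x := by
  obtain ⟨N, rfl⟩ : ∃ N', N = N' + 1 := ⟨N - 1, by omega⟩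
  have hγ := one_add_alphaC_mul_chiC_mul_prod_le_gammaNS (N := N + 1) (Abar := A + B * K)
    (K := K) hQb hPb hL hP hQ hi
  rw [Nat.add_sub_cancel] at hγ
  calc _ ≤ _ := Vopt_traj_one_le_chiC_mul hQb hPb hL hP hQ hinv hKU hx hu
    _ ≤ _ := mul_le_mul_of_nonneg_left
        (Vopt_le_prod_mul_Vopt hQb hPb hL hP hQ hinv hKU hx (Nat.sub_le _ i) hattain)
        (one_add_alphaC_mul_chiC_nonneg hQb hPb hL hP hQ N)
    _ ≤ _ := by
      rw [← mul_assoc]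
      exact mul_le_mul_of_nonneg_right hγ
        (Vopt_nonneg hP.posSemidef hQ.posSemidef ⟨_, feasible_feedbackInput hinv hKU hx _⟩)

lemma Vopt_traj_one_le_gammaNS_mul_Vopt_succ {S N j : ℕ} (hj : j ≤ S) (hjN : j < N)
    {x : Fin n → ℝ} {u : ℕ → Fin m → ℝ} (hx : x ∈ X0)
    (hu : IsOptimal A B P Q X0 U (N - j) x u) :
    Vopt A B P Q X0 U (N - j) (traj A B x u 1) ≤
      gammaNS Qb Pb P (A + B * K) Q K N S * Vopt A B P Q X0 U (N - j + 1) x := by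
  rw [show N - j = N - j - 1 + 1 by omega] at hu ⊢
  calc _ ≤ _ := Vopt_traj_one_le_chiC_mul hQb hPb hL hP hQ hinv hKU hx hu
    _ ≤ _ := mul_le_mul_of_nonneg_left
        (Vopt_le_Vopt_succ hP.posSemidef hQ.posSemidef ⟨_, feasible_feedbackInput hinv hKU hx _⟩)
        (one_add_alphaC_mul_chiC_nonneg hQb hPb hL hP hQ _)
    _ ≤ _ := mul_le_mul_of_nonneg_right
        (one_add_alphaC_mul_chiC_le_gammaNS hQb hPb hL hP hQ (by omega))
        (Vopt_nonneg hP.posSemidef hQ.posSemidef ⟨_, feasible_feedbackInput hinv hKU hx _⟩)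

end Contraction

section ReplayAttack

variable {ϑ : ℕ → Bool} {s : ℕ → ℕ}

lemma attackCounter_eq_zero (hs0 : s 0 = 0)
    (hsrec : ∀ k, s (k + 1) = if ϑ (k + 1) = true then s k + 1 else 0) {k : ℕ}
    (hk : ϑ k = false) : s k = 0 := by
  cases k with
  | zero => exact hs0
  | succ k => simp [hsrec, hk]

lemma attackCounter_eq_succ (hϑ0 : ϑ 0 = false)
    (hsrec : ∀ k, s (k + 1) = if ϑ (k + 1) = true then s k + 1 else 0) {k : ℕ}
    (hk : ϑ k = true) : s k = s (k - 1) + 1 := by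
  cases k with
  | zero => simp [hϑ0] at hk
  | succ k => simp [hsrec, hk]

lemma theta_sub_attackCounter (hϑ0 : ϑ 0 = false) (hs0 : s 0 = 0)
    (hsrec : ∀ k, s (k + 1) = if ϑ (k + 1) = true then s k + 1 else 0) (k : ℕ) :
    ϑ (k - s k) = false := by
  induction k with
  | zero => rwa [hs0]
  | succ k ih =>
    cases hk : ϑ (k + 1) with
    | false => rwa [attackCounter_eq_zero hs0 hsrec hk]
    | true => rwa [attackCounter_eq_succ hϑ0 hsrec hk, Nat.add_sub_add_right, Nat.add_sub_cancel]

lemma closedLoop_eq_traj {n m : ℕ} {A : Matrix (Fin n) (Fin n) ℝ}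
    {B : Matrix (Fin n) (Fin m) ℝ} {x : ℕ → Fin n → ℝ} {uplan : ℕ → ℕ → Fin m → ℝ}
    (hs0 : s 0 = 0) (hsrec : ∀ k, s (k + 1) = if ϑ (k + 1) = true then s k + 1 else 0)
    (hdyn : ∀ k, x (k + 1) = A *ᵥ x k + B *ᵥ uplan (k - s k) (s k)) (k : ℕ) :
    x k = traj A B (x (k - s k)) (uplan (k - s k)) (s k) := by
  induction k with
  | zero => rw [hs0]; rfl
  | succ k ih =>
    rw [hsrec]
    split_ifs
    · rw [Nat.add_sub_add_right, traj, ← ih, hdyn]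
    · rfl

end ReplayAttack

theorem stmt13_general {n m : ℕ}
    (A : Matrix (Fin n) (Fin n) ℝ) (B : Matrix (Fin n) (Fin m) ℝ)
    (K : Matrix (Fin m) (Fin n) ℝ) (Qb Pb : Matrix (Fin n) (Fin n) ℝ)
    (hQb : Qb.PosDef) (hPb : Pb.PosDef)
    (hLyap : (A + B * K)ᵀ * Pb * (A + B * K) - Pb = -Qb)
    (c : ℝ)
    (X0 : Set (Fin n → ℝ)) (hX0 : X0 = {x : Fin n → ℝ | qf Pb x ≤ c})
    (X : Set (Fin n → ℝ)) (U : Set (Fin m → ℝ))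
    (hX0X : X0 ⊆ X) (hKU : ∀ x ∈ X, K *ᵥ x ∈ U)
    (P : Matrix (Fin n) (Fin n) ℝ) (Q : Matrix (Fin m) (Fin m) ℝ)
    (hP : P.PosDef) (hQ : Q.PosDef)
    (S N : ℕ) (hSN : S + 1 ≤ N)
    (ϑ : ℕ → Bool) (hϑ0 : ϑ 0 = false)
    (s : ℕ → ℕ) (hs0 : s 0 = 0)
    (hsrec : ∀ k, s (k + 1) = if ϑ (k + 1) = true then s k + 1 else 0)
    (hsS : ∀ k, s k ≤ S)
    (x : ℕ → Fin n → ℝ) (hxX0 : ∀ k, x k ∈ X0)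
    (uplan : ℕ → ℕ → Fin m → ℝ)
    (hplan : ∀ k, ϑ k = false →
      Feasible A B X0 U N (x k) (uplan k) ∧
        cost A B P Q N (x k) (uplan k) = Vopt A B P Q X0 U N (x k))
    (hdyn : ∀ k, x (k + 1) = A *ᵥ x k + B *ᵥ uplan (k - s k) (s k))
    (hattain : ∀ k, ∀ N' : ℕ, N - S ≤ N' → N' ≤ N →
      ∃ w : ℕ → Fin m → ℝ, Feasible A B X0 U N' (x k) w ∧
        cost A B P Q N' (x k) w = Vopt A B P Q X0 U N' (x k))
    :
    ∀ k : ℕ, Vopt A B P Q X0 U (N - s k) (x (k + 1))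
      ≤ gammaNS Qb Pb P (A + B * K) Q K N S * Vopt A B P Q X0 U (N - s (k - 1)) (x k) := by
  intro k
  have hinv : ∀ y ∈ X0, (A + B * K) *ᵥ y ∈ X0 := fun y hy => by
    rw [hX0] at hy ⊢
    exact qf_mulVec_le_of_lyapunov hQb.posSemidef hLyap hy
  have hKU₀ : ∀ y ∈ X0, K *ᵥ y ∈ U := fun y hy => hKU y (hX0X hy)
  rcases n.eq_zero_or_pos with rfl | hn
  · have h0 : ∀ k, x k = 0 := fun k => Subsingleton.elim _ _
    simp only [h0, Vopt_at_zero hP.posSemidef hQ.posSemidef hinv hKU₀ (h0 0 ▸ hxX0 0), mul_zero,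
      le_refl]
  have : NeZero n := ⟨hn.ne'⟩
  have hsN : s k < N := (hsS k).trans_lt hSN
  have hopt : IsOptimal A B P Q X0 U (N - s k) (x k) (fun σ => uplan (k - s k) (s k + σ)) := by
    have h := hplan _ (theta_sub_attackCounter hϑ0 hs0 hsrec k)
    rw [← Nat.sub_add_cancel hsN.le] at h
    simpa only [← closedLoop_eq_traj hs0 hsrec hdyn k] using
      IsOptimal.shift hP.posSemidef hQ.posSemidef (s k) h
  rw [show x (k + 1) = traj A B (x k) (fun σ => uplan (k - s k) (s k + σ)) 1 from hdyn k]
  cases hk : ϑ k with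
  | false =>
    rw [attackCounter_eq_zero hs0 hsrec hk, Nat.sub_zero] at hopt ⊢
    exact Vopt_traj_one_le_gammaNS_mul_Vopt_sub hQb hPb hLyap hP hQ hinv hKU₀ (hsS _)
      (by omega) (hxX0 k) hopt fun N' h₁ h₂ =>
        hattain k N' ((Nat.sub_le_sub_left (hsS _) N).trans h₁) h₂.le
  | true =>
    rw [show N - s (k - 1) = N - s k + 1 by have := attackCounter_eq_succ hϑ0 hsrec hk; omega]
    exact Vopt_traj_one_le_gammaNS_mul_Vopt_succ hQb hPb hLyap hP hQ hinv hKU₀ (hsS k) hsN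
      (hxX0 k) hopt

/-- Per-step contraction of AR-RHC under replay attacks, inequality (15):
along any closed-loop trajectory of the AR-RHC with horizon `N ≥ S + 1` under a replay
attack signal with at most `S` consecutive attacks (each encountered `N′`-QP,
`N − S ≤ N′ ≤ N`, attaining its infimum), for all `k ≥ 0` (with `s(−1) := 0`):
`V_{N−s(k)}(x(k+1)) ≤ γ_{N,S}·V_{N−s(k−1)}(x(k))`. -/
theorem stmt13 {n m : ℕ}
    (A : Matrix (Fin n) (Fin n) ℝ) (B : Matrix (Fin n) (Fin m) ℝ)
    (K : Matrix (Fin m) (Fin n) ℝ) (Qb Pb : Matrix (Fin n) (Fin n) ℝ)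
    (hQb : Qb.PosDef) (hPb : Pb.PosDef)
    (hLyap : (A + B * K)ᵀ * Pb * (A + B * K) - Pb = -Qb)
    (c : ℝ) (hc : 0 < c)
    (X0 : Set (Fin n → ℝ)) (hX0 : X0 = {x : Fin n → ℝ | qf Pb x ≤ c})
    (X : Set (Fin n → ℝ)) (U : Set (Fin m → ℝ))
    (hX : Convex ℝ X) (hU : Convex ℝ U)
    (h0X : (0 : Fin n → ℝ) ∈ X) (h0U : (0 : Fin m → ℝ) ∈ U)
    (hX0X : X0 ⊆ X) (hKU : ∀ x ∈ X, K *ᵥ x ∈ U)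
    (P : Matrix (Fin n) (Fin n) ℝ) (Q : Matrix (Fin m) (Fin m) ℝ)
    (hP : P.PosDef) (hQ : Q.PosDef)
    (S N : ℕ) (hSN : S + 1 ≤ N)
    (ϑ : ℕ → Bool) (hϑ0 : ϑ 0 = false)
    (s : ℕ → ℕ) (hs0 : s 0 = 0)
    (hsrec : ∀ k, s (k + 1) = if ϑ (k + 1) = true then s k + 1 else 0)
    (hsS : ∀ k, s k ≤ S)
    (x : ℕ → Fin n → ℝ) (hxX0 : ∀ k, x k ∈ X0)
    (uplan : ℕ → ℕ → Fin m → ℝ)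
    (hplan : ∀ k, ϑ k = false →
      Feasible A B X0 U N (x k) (uplan k) ∧
        cost A B P Q N (x k) (uplan k) = Vopt A B P Q X0 U N (x k))
    (hdyn : ∀ k, x (k + 1) = A *ᵥ x k + B *ᵥ uplan (k - s k) (s k))
    (hattain : ∀ k, ∀ N' : ℕ, N - S ≤ N' → N' ≤ N →
      ∃ w : ℕ → Fin m → ℝ, Feasible A B X0 U N' (x k) w ∧
        cost A B P Q N' (x k) w = Vopt A B P Q X0 U N' (x k))
    :
    ∀ k : ℕ, Vopt A B P Q X0 U (N - s k) (x (k + 1))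
      ≤ gammaNS Qb Pb P (A + B * K) Q K N S * Vopt A B P Q X0 U (N - s (k - 1)) (x k) :=
  stmt13_general A B K Qb Pb hQb hPb hLyap c X0 hX0 X U hX0X hKU P Q hP hQ S N hSN ϑ hϑ0 s hs0 hsrec
    hsS x hxX0 uplan hplan hdyn hattain
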